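/- Let F be a field of characteristic not 2, let Ψ be an n×n matrix admitting a nonsingular skew-symmetric M with MΨ symmetric, and suppose the characteristic polynomial of Ψ is a power of an irreducible polynomial p of odd degree. Then p(x) = x. -/
import Mathlib


open Matrix Polynomial

private lemma charmatrix_transpose' {R : Type*} [CommRing R] {m : ℕ}
    (A : Matrix (Fin m) (Fin m) R) : charmatrix Aᵀ = (charmatrix A)ᵀ := by
  ext i j
  by_cases h : i = j <;>
    simp [charmatrix_apply, Matrix.transpose_apply, Matrix.diagonal, h, Ne.symm, eq_comm]

private lemma charpoly_neg' {R : Type*} [CommRing R] {m : ℕ}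
    (A : Matrix (Fin m) (Fin m) R) :
    (-A).charpoly = (-1 : R[X]) ^ m * (A.charpoly.comp (-X)) := by
  classical
  have hmap : charmatrix (-A) = -((charmatrix A).map (eval₂RingHom C (-X : R[X]))) := by
    ext i j
    by_cases h : i = j <;>
      simp [charmatrix_apply, Matrix.diagonal, h] <;> ring
  have hdet : (-A).charpoly = (-1 : R[X]) ^ m * ((charmatrix A).map (eval₂RingHom C (-X : R[X]))).det := by
    rw [Matrix.charpoly, hmap]
    rw [show (-((charmatrix A).map (eval₂RingHom C (-X : R[X])))) =
      (-1 : R[X]) • ((charmatrix A).map (eval₂RingHom C (-X : R[X]))) by simp]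
    rw [Matrix.det_smul]
    simp [Fintype.card_fin]
  rw [hdet]
  congr 1
  rw [← RingHom.mapMatrix_apply, ← RingHom.map_det]
  rfl

/-- If `Ψ` admits a nonsingular skew-symmetric `M` with `M * Ψ` symmetric, and its
characteristic polynomial is a power of a monic irreducible polynomial `p` of odd
degree, then `p = X`. -/
theorem stmt3 {F : Type*} [Field F] (h2 : (2 : F) ≠ 0) {n : ℕ}
    (Ψ : Matrix (Fin n) (Fin n) F)
    (hM : ∃ M : Matrix (Fin n) (Fin n) F, IsUnit M.det ∧ Mᵀ = -M ∧ (M * Ψ)ᵀ = M * Ψ)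
    (p : Polynomial F) (hirr : Irreducible p) (hmonic : p.Monic)
    (hodd : Odd p.natDegree) (s : ℕ) (hs : 0 < s) (hchar : Ψ.charpoly = p ^ s) :
    p = Polynomial.X := by
  classical
  obtain ⟨M, hdet, hskew, hsym⟩ := hM
  -- Step 1 : M * Ψ = (-Ψᵀ) * M
  have hMΨ : M * Ψ = (-Ψᵀ) * M := by
    have : (M * Ψ)ᵀ = Ψᵀ * Mᵀ := Matrix.transpose_mul M Ψ
    rw [hsym, hskew] at this
    rw [this]
    simp [Matrix.mul_neg, Matrix.neg_mul]
  -- Step 2 : charpoly Ψ = charpoly (-Ψᵀ)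
  have hsim : Ψ.charpoly = (-Ψᵀ).charpoly := by
    have key : (C.mapMatrix M) * charmatrix Ψ = charmatrix (-Ψᵀ) * (C.mapMatrix M) := by
      have hc : ∀ A : Matrix (Fin n) (Fin n) F, charmatrix A
          = Matrix.scalar (Fin n) (X : F[X]) - C.mapMatrix A := fun A => rfl
      rw [hc, hc, Matrix.mul_sub, Matrix.sub_mul, ← RingHom.map_mul, ← RingHom.map_mul, hMΨ]
      congr 1
      exact (Matrix.scalar_commute (X : F[X]) (fun r => Commute.all _ _) _).symm
    have hdetkey := congrArg Matrix.det key
    rw [Matrix.det_mul, Matrix.det_mul, ← RingHom.map_det] at hdetkey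
    have hC0 : (C (M.det) : F[X]) ≠ 0 := by
      simpa using hdet.ne_zero
    exact mul_left_cancel₀ hC0 (hdetkey.trans (mul_comm _ _))
  -- Step 3 : charpoly (-Ψᵀ) = charpoly (-Ψ)
  have htr : (-Ψᵀ).charpoly = (-Ψ).charpoly := by
    rw [Matrix.charpoly, Matrix.charpoly, show (-Ψᵀ) = (-Ψ)ᵀ by simp,
      charmatrix_transpose', Matrix.det_transpose]
  -- Step 4 : functional equation
  have hfe : Ψ.charpoly = (-1 : F[X]) ^ n * (Ψ.charpoly.comp (-X)) := by
    conv_lhs => rw [hsim, htr]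
    exact charpoly_neg' Ψ
  -- degrees
  have hd : p.natDegree ≠ 0 := by
    rintro h0
    rw [h0] at hodd
    exact (Nat.not_odd_zero) hodd
  have hn : n = s * p.natDegree := by
    have := Matrix.charpoly_natDegree_eq_dim Ψ
    rw [hchar, Polynomial.natDegree_pow] at this
    simpa [Fintype.card_fin] using this.symm
  set q : F[X] := -(p.comp (-X)) with hq
  have hpow : p ^ s = q ^ s := by
    have h1 : (p ^ s : F[X]).comp (-X) = (p.comp (-X)) ^ s := Polynomial.pow_comp p (-X) s
    have h2 : ((-1 : F[X]) ^ n) = ((-1 : F[X]) ^ s) := by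
      rw [hn, pow_mul']
      congr 1
      exact Odd.neg_one_pow hodd
    calc p ^ s = Ψ.charpoly := hchar.symm
      _ = (-1 : F[X]) ^ n * (Ψ.charpoly.comp (-X)) := hfe
      _ = (-1 : F[X]) ^ s * ((p.comp (-X)) ^ s) := by rw [h2, hchar, h1]
      _ = q ^ s := by rw [hq, neg_pow (p.comp (-X))]
  -- q is monic of the same degree
  have hdegcomp : (p.comp (-X)).natDegree = p.natDegree := by
    rw [Polynomial.natDegree_comp]
    simp
  have hlead : (p.comp (-X)).leadingCoeff = (-1 : F) ^ p.natDegree := by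
    rw [Polynomial.leadingCoeff_comp (by simp : ((-X : F[X]).natDegree ≠ 0))]
    simp [hmonic.leadingCoeff]
  have hqmonic : q.Monic := by
    rw [Polynomial.Monic, hq, Polynomial.leadingCoeff_neg, hlead, hodd.neg_one_pow]
    ring
  have hqdeg : q.natDegree = p.natDegree := by
    rw [hq, Polynomial.natDegree_neg, hdegcomp]
  -- p = q
  have hpq : p = q := by
    have hprime : Prime p := hirr.prime
    have hdvd : p ∣ q := hprime.dvd_of_dvd_pow (hpow ▸ dvd_pow_self p hs.ne')
    obtain ⟨c, hc⟩ := hdvd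
    have hq0 : q ≠ 0 := hqmonic.ne_zero
    have hc0 : c ≠ 0 := by rintro rfl; simp at hc; exact hq0 hc
    have hdc : c.natDegree = 0 := by
      have := hqdeg
      rw [hc, Polynomial.natDegree_mul hmonic.ne_zero hc0] at this
      omega
    have hcl : c.coeff 0 = 1 := by
      have h1 : q.leadingCoeff = p.leadingCoeff * c.leadingCoeff :=
        hc ▸ Polynomial.leadingCoeff_mul p c
      rw [hqmonic.leadingCoeff, hmonic.leadingCoeff, one_mul] at h1
      rw [Polynomial.leadingCoeff, hdc] at h1
      exact h1.symm
    have : c = 1 := by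
      rw [Polynomial.eq_C_of_natDegree_eq_zero hdc, hcl, Polynomial.C_1]
    rw [hc, this, mul_one]
  -- evaluate at 0
  have heval : p.eval 0 = 0 := by
    have h1 : p.eval 0 = -(p.eval 0) := by
      conv_lhs => rw [hpq, hq]
      rw [Polynomial.eval_neg, Polynomial.eval_comp]
      simp
    have h2' : (2 : F) * p.eval 0 = 0 := by linear_combination h1
    exact (mul_eq_zero.mp h2').resolve_left h2
  -- X divides p, hence p = X
  have hXdvd : Polynomial.X ∣ p := by
    rw [Polynomial.X_dvd_iff, Polynomial.coeff_zero_eq_eval_zero, heval]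
  obtain ⟨c, hc⟩ := hXdvd
  rcases hirr.isUnit_or_isUnit hc with h | h
  · exact absurd h Polynomial.not_isUnit_X
  · obtain ⟨r, hr, hrc⟩ := Polynomial.isUnit_iff.mp h
    have hpr : p = Polynomial.X * C r := by rw [hc, hrc]
    have hr1 : r = 1 := by
      have hl := hmonic.leadingCoeff
      rw [hpr] at hl
      simpa using hl
    rw [hpr, hr1, Polynomial.C_1, mul_one]
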